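/- arXiv:1112.4297 — 2 statements merged into one kernel-verified Lean document; each statement's English description precedes it below -/
import Mathlib

section
/- Let 1 ≤ k ≤ N and let Λ be either Λᵃ(kπh) or Λᵒ(kπh), with φ the corresponding eigenvector (φ_j = sin(kπx_j), φ_{j+1/2} = ((40+Λ)/(8(10−Λ)))·(φ_j + φ_{j+1})). Then the boundary observability identity ‖φ‖²_{h,1} = (1/W(Λ))·(φ_N/h)² holds, i.e. W(Λ)·‖φ‖²_{h,1} = sin²(kπNh)/h². -/
open Real Finset

noncomputable def Delta (η : ℝ) : ℝ :=
  1 + 268 * Real.cos (η / 2) ^ 2 - 44 * Real.cos (η / 2) ^ 4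

noncomputable def Lama (η : ℝ) : ℝ :=
  120 * Real.sin (η / 2) ^ 2 / (11 + 4 * Real.cos (η / 2) ^ 2 + Real.sqrt (Delta η))

noncomputable def Lamo (η : ℝ) : ℝ :=
  (22 + 8 * Real.cos (η / 2) ^ 2 + 2 * Real.sqrt (Delta η)) / (1 + Real.sin (η / 2) ^ 2)

noncomputable def W (Λ : ℝ) : ℝ :=
  24 * (Λ - 10) ^ 2 * (Λ - 12) * (Λ - 60) /
    ((-19 * Λ ^ 2 - 120 * Λ + 3600) * (Λ ^ 2 + 16 * Λ + 240))

/-- Discrete H¹-seminorm squared of a P2 vector with nodal components `f`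
and midpoint components `g`. -/
noncomputable def normH1sq (N : ℕ) (h : ℝ) (f g : ℕ → ℝ) : ℝ :=
  (h / 6) * ∑ j ∈ Finset.range (N + 1),
    ((-(f (j + 1) - 4 * g j + 3 * f j) / h) ^ 2
      + 4 * ((f (j + 1) - f j) / h) ^ 2
      + ((f j - 4 * g j + 3 * f (j + 1)) / h) ^ 2)

/-! The eigenvector is `φ j = sin (j η)` with `η = kπh`. On the element `[x_j, x_{j+1}]` the nodal
sum and difference are `2 sin u cos (η/2)` and `2 cos u sin (η/2)` with `u = (j + 1/2) η`, so the
element energy is a constant `E` plus a multiple of `cos ((2j+1) η)`, and these cosines sum to zero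
because `(N+1) η = kπ`. Hence `‖φ‖²_{h,1} = E / (6h²)`. Both `Λᵃ` and `Λᵒ` are roots of the
dispersion relation `((2 - c²) Λ - 22 - 8c²)² = 4Δ` (`c = cos (η/2)`), which turns `W Λ * E` into
`24 c² s²`, while `sin² (kπNh) = sin² η = 4 c² s²`. -/

lemma two_mul_sin_mul_sum_range_cos_odd_mul (η : ℝ) (n : ℕ) :
    2 * sin η * ∑ j ∈ range n, cos ((2 * j + 1) * η) = sin (2 * n * η) := by
  induction n with
  | zero => simp
  | succ n ih =>
    rw [sum_range_succ, mul_add, ih, eq_comm, ← sub_eq_iff_eq_add', sin_sub_sin]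
    push_cast
    ring_nf

lemma sum_range_cos_odd_mul_eq_zero {η : ℝ} {n : ℕ} (hη : sin η ≠ 0) (hn : sin (n * η) = 0) :
    ∑ j ∈ range n, cos ((2 * j + 1) * η) = 0 := by
  have h := two_mul_sin_mul_sum_range_cos_odd_mul η n
  rw [mul_assoc 2 (n : ℝ), sin_two_mul, hn, mul_zero, zero_mul] at h
  simpa [hη] using h

lemma p2_element_energy (x η α : ℝ) :
    (-(sin (x + η) - 4 * (α * (sin x + sin (x + η))) + 3 * sin x)) ^ 2
        + 4 * (sin (x + η) - sin x) ^ 2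
        + (sin x - 4 * (α * (sin x + sin (x + η))) + 3 * sin (x + η)) ^ 2
      = 4 * (2 - 4 * α) ^ 2 * cos (η / 2) ^ 2 + 12 * sin (η / 2) ^ 2
        + (12 * sin (η / 2) ^ 2 - 4 * (2 - 4 * α) ^ 2 * cos (η / 2) ^ 2)
          * cos (2 * x + η) := by
  have hadd : sin x + sin (x + η) = 2 * sin (x + η / 2) * cos (η / 2) := by
    rw [sin_add_sin, ← cos_neg]; ring_nf
  have hsub : sin (x + η) - sin x = 2 * sin (η / 2) * cos (x + η / 2) := by
    rw [sin_sub_sin]; ring_nf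
  have hcos : cos (2 * x + η) = 2 * cos (x + η / 2) ^ 2 - 1 := by
    rw [← cos_two_mul]; ring_nf
  have hsplit : ∀ f₀ f₁ : ℝ,
      (-(f₁ - 4 * (α * (f₀ + f₁)) + 3 * f₀)) ^ 2 + 4 * (f₁ - f₀) ^ 2
          + (f₀ - 4 * (α * (f₀ + f₁)) + 3 * f₁) ^ 2
        = 2 * (2 - 4 * α) ^ 2 * (f₀ + f₁) ^ 2 + 6 * (f₁ - f₀) ^ 2 := by
    intros; ring
  rw [hsplit, hadd, hsub, hcos]
  linear_combination (8 * (2 - 4 * α) ^ 2 * cos (η / 2) ^ 2) * sin_sq_add_cos_sq (x + η / 2)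



lemma normH1sq_eq_of_sin {N : ℕ} {h η : ℝ} (α : ℝ) (hNh : ((N : ℝ) + 1) * h = 1)
    (hη : sin η ≠ 0) (hNη : sin (((N : ℝ) + 1) * η) = 0) {φ ψ : ℕ → ℝ}
    (hφ : ∀ j : ℕ, φ j = sin (j * η)) (hψ : ∀ j : ℕ, ψ j = α * (φ j + φ (j + 1))) :
    normH1sq N h φ ψ
      = (4 * (2 - 4 * α) ^ 2 * cos (η / 2) ^ 2 + 12 * sin (η / 2) ^ 2) / (6 * h ^ 2) := by
  have hh : h ≠ 0 := by rintro rfl; simp at hNh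
  have hterm : ∀ j : ℕ,
      (-(φ (j + 1) - 4 * ψ j + 3 * φ j) / h) ^ 2 + 4 * ((φ (j + 1) - φ j) / h) ^ 2
          + ((φ j - 4 * ψ j + 3 * φ (j + 1)) / h) ^ 2
        = (4 * (2 - 4 * α) ^ 2 * cos (η / 2) ^ 2 + 12 * sin (η / 2) ^ 2
          + (12 * sin (η / 2) ^ 2 - 4 * (2 - 4 * α) ^ 2 * cos (η / 2) ^ 2)
            * cos ((2 * j + 1) * η)) / h ^ 2 := by
    intro j
    have hφ₁ : φ (j + 1) = sin (j * η + η) := by rw [hφ]; push_cast; ring_nf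
    rw [hψ, hφ₁, hφ, show (2 * (j : ℝ) + 1) * η = 2 * (j * η) + η by ring,
      ← p2_element_energy]
    ring
  rw [normH1sq, sum_congr rfl fun j _ => hterm j, ← sum_div, sum_add_distrib, ← mul_sum,
    sum_const, card_range, sum_range_cos_odd_mul_eq_zero hη (by exact_mod_cast hNη)]
  field_simp
  rw [nsmul_eq_mul, mul_zero, add_zero]
  push_cast
  linear_combination (4 * (2 - 4 * α) ^ 2 * cos (η / 2) ^ 2 + 12 * sin (η / 2) ^ 2) * hNh

lemma one_le_Delta (η : ℝ) : 1 ≤ Delta η := by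
  have h0 := sq_nonneg (cos (η / 2))
  have h1 := cos_sq_le_one (η / 2)
  rw [Delta]
  nlinarith

lemma two_sub_cos_sq_mul_Lama (η : ℝ) :
    (2 - cos (η / 2) ^ 2) * Lama η = 22 + 8 * cos (η / 2) ^ 2 - 2 * √(Delta η) := by
  have hΔ : √(Delta η) ^ 2 = 1 + 268 * cos (η / 2) ^ 2 - 44 * cos (η / 2) ^ 4 :=
    sq_sqrt (by linarith [one_le_Delta η])
  have hden : 0 < 11 + 4 * cos (η / 2) ^ 2 + √(Delta η) := by positivity
  rw [Lama]
  field_simp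
  linear_combination 2 * hΔ + 120 * (2 - cos (η / 2) ^ 2) * sin_sq_add_cos_sq (η / 2)

lemma two_sub_cos_sq_mul_Lamo (η : ℝ) :
    (2 - cos (η / 2) ^ 2) * Lamo η = 22 + 8 * cos (η / 2) ^ 2 + 2 * √(Delta η) := by
  have hden : 2 - cos (η / 2) ^ 2 ≠ 0 := by nlinarith [cos_sq_le_one (η / 2)]
  rw [Lamo, sin_sq, show 1 + (1 - cos (η / 2) ^ 2) = 2 - cos (η / 2) ^ 2 by ring]
  exact mul_div_cancel₀ _ hden

lemma sq_dispersion {η Λ : ℝ} (hΛ : Λ = Lama η ∨ Λ = Lamo η) :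
    ((2 - cos (η / 2) ^ 2) * Λ - 22 - 8 * cos (η / 2) ^ 2) ^ 2 = 4 * Delta η := by
  have hΔ : √(Delta η) ^ 2 = Delta η := sq_sqrt (by linarith [one_le_Delta η])
  rcases hΛ with rfl | rfl
  · rw [two_sub_cos_sq_mul_Lama]; linear_combination 4 * hΔ
  · rw [two_sub_cos_sq_mul_Lamo]; linear_combination 4 * hΔ

lemma Lama_nonneg (η : ℝ) : 0 ≤ Lama η := by
  rw [Lama]; positivity

lemma Lama_lt_ten {η : ℝ} (hc : cos (η / 2) ≠ 0) : Lama η < 10 := by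
  have hx : 0 < cos (η / 2) ^ 2 := by positivity
  have hx1 := cos_sq_le_one (η / 2)
  have hΔ : √(Delta η) ^ 2 = 1 + 268 * cos (η / 2) ^ 2 - 44 * cos (η / 2) ^ 4 :=
    sq_sqrt (by linarith [one_le_Delta η])
  have hr : 1 + 9 * cos (η / 2) ^ 2 < √(Delta η) := by
    refine lt_of_pow_lt_pow_left₀ 2 (sqrt_nonneg _) ?_
    rw [hΔ]
    nlinarith
  have h := two_sub_cos_sq_mul_Lama η
  nlinarith

lemma twelve_lt_Lamo {η : ℝ} (hc : cos (η / 2) ≠ 0) : 12 < Lamo η := by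
  have hx : 0 < cos (η / 2) ^ 2 := by positivity
  have hx1 := cos_sq_le_one (η / 2)
  have hr : 1 ≤ √(Delta η) := one_le_sqrt.mpr (one_le_Delta η)
  have h := two_sub_cos_sq_mul_Lamo η
  nlinarith

lemma W_mul_energy {Λ x : ℝ} (hx : x ≠ 2) (hΛ : 0 ≤ Λ ∧ Λ < 10 ∨ 12 < Λ)
    (hQ : ((2 - x) * Λ - 22 - 8 * x) ^ 2 = 4 * (1 + 268 * x - 44 * x ^ 2)) :
    W Λ * (4 * (2 - 4 * ((40 + Λ) / (8 * (10 - Λ)))) ^ 2 * x + 12 * (1 - x))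
      = 24 * x * (1 - x) := by
  have h10 : 10 - Λ ≠ 0 := by rcases hΛ with h | h <;> [linarith; linarith]
  have hD₁ : -19 * Λ ^ 2 - 120 * Λ + 3600 ≠ 0 := by
    rcases hΛ with h | h
    · exact (by nlinarith : (0 : ℝ) < _).ne'
    · exact (by nlinarith : _ < (0 : ℝ)).ne
  have hD₂ : Λ ^ 2 + 16 * Λ + 240 ≠ 0 := by nlinarith [sq_nonneg (Λ + 8)]
  have hmid : 2 - 4 * ((40 + Λ) / (8 * (10 - Λ))) = -5 * Λ / (2 * (10 - Λ)) := by
    field_simp; ring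
  have key : (Λ - 12) * (Λ - 60) * (25 * Λ ^ 2 * x + 12 * (1 - x) * (10 - Λ) ^ 2)
      = (1 - x) * x * ((-19 * Λ ^ 2 - 120 * Λ + 3600) * (Λ ^ 2 + 16 * Λ + 240)) := by
    -- after multiplying by `(2 - x)²` this is a polynomial multiple of the dispersion relation
    refine mul_left_cancel₀ (pow_ne_zero 2 (sub_ne_zero.mpr hx.symm)) ?_
    linear_combination ((3600 * x ^ 2 - 10800 * x + 7200) + (-120 * x ^ 2 + 660 * x - 840) * Λ
      + (-19 * x ^ 2 + 32 * x + 12) * Λ ^ 2) * hQ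
  rw [W, hmid, div_mul_eq_mul_div, div_eq_iff (mul_ne_zero hD₁ hD₂)]
  field_simp
  linear_combination 4 * (10 - Λ) ^ 2 * key

theorem stmt_9_general (N : ℕ) (h : ℝ) (hh : h = 1 / ((N : ℝ) + 1))
    (k : ℕ) (hk1 : 1 ≤ k) (hkN : k ≤ N)
    (Λ : ℝ) (hΛ : Λ = Lama ((k : ℝ) * Real.pi * h) ∨ Λ = Lamo ((k : ℝ) * Real.pi * h))
    (φ : ℕ → ℝ) (hφ : ∀ j : ℕ, φ j = Real.sin ((k : ℝ) * Real.pi * ((j : ℝ) * h)))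
    (ψ : ℕ → ℝ)
    (hψ : ∀ j : ℕ, ψ j = (40 + Λ) / (8 * (10 - Λ)) * (φ j + φ (j + 1))) :
    W Λ * normH1sq N h φ ψ = Real.sin ((k : ℝ) * Real.pi * (N : ℝ) * h) ^ 2 / h ^ 2 := by
  set η := (k : ℝ) * π * h
  have hNh : ((N : ℝ) + 1) * h = 1 := by rw [hh]; field_simp
  have hh0 : 0 < h := by rw [hh]; positivity
  have hNη : ((N : ℝ) + 1) * η = k * π := by linear_combination (k : ℝ) * π * hNh
  have hk : (1 : ℝ) ≤ k ∧ (k : ℝ) ≤ N := ⟨by exact_mod_cast hk1, by exact_mod_cast hkN⟩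
  have hη : 0 < η ∧ η < π := ⟨by positivity, by nlinarith [pi_pos]⟩
  have hc : 0 < cos (η / 2) := cos_pos_of_mem_Ioo ⟨by linarith [pi_pos], by linarith⟩
  have hrange : 0 ≤ Λ ∧ Λ < 10 ∨ 12 < Λ := hΛ.imp
    (fun hA => by rw [hA]; exact ⟨Lama_nonneg η, Lama_lt_ten hc.ne'⟩)
    (fun hO => by rw [hO]; exact twelve_lt_Lamo hc.ne')
  have hW := W_mul_energy (x := cos (η / 2) ^ 2) (by nlinarith [cos_sq_le_one (η / 2)]) hrange
    (by rw [sq_dispersion hΛ, Delta]; ring)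
  have hnorm := normH1sq_eq_of_sin _ hNh (sin_pos_of_pos_of_lt_pi hη.1 hη.2).ne'
    (by rw [hNη, sin_nat_mul_pi]) (fun j => by rw [hφ]; congr 1; simp only [η]; ring) hψ
  have hrhs : sin ((k : ℝ) * π * N * h) ^ 2 = sin η ^ 2 := by
    rw [show (k : ℝ) * π * N * h = k * π - η by linear_combination (k : ℝ) * π * hNh,
      sin_nat_mul_pi_sub]
    ring_nf
    simp
  have hsin : sin η = 2 * sin (η / 2) * cos (η / 2) := by rw [← sin_two_mul]; ring_nf
  rw [hnorm, hrhs, hsin, mul_pow, mul_pow, sin_sq (η / 2), mul_div_assoc', hW]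
  field_simp
  ring

theorem stmt_9 (N : ℕ) (hN : 1 ≤ N) (h : ℝ) (hh : h = 1 / ((N : ℝ) + 1))
    (k : ℕ) (hk1 : 1 ≤ k) (hkN : k ≤ N)
    (Λ : ℝ) (hΛ : Λ = Lama ((k : ℝ) * Real.pi * h) ∨ Λ = Lamo ((k : ℝ) * Real.pi * h))
    (φ : ℕ → ℝ) (hφ : ∀ j : ℕ, φ j = Real.sin ((k : ℝ) * Real.pi * ((j : ℝ) * h)))
    (ψ : ℕ → ℝ)
    (hψ : ∀ j : ℕ, ψ j = (40 + Λ) / (8 * (10 - Λ)) * (φ j + φ (j + 1))) :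
    W Λ * normH1sq N h φ ψ = Real.sin ((k : ℝ) * Real.pi * (N : ℝ) * h) ^ 2 / h ^ 2 :=
  stmt_9_general N h hh k hk1 hkN Λ hΛ φ hφ ψ hψ
end

section
/- (i) For every η⁺ ∈ (0, π) there exists γ > 0 such that √(Λᵃ(η₂)) − √(Λᵃ(η₁)) ≥ γ·(η₂ − η₁) whenever 0 ≤ η₁ ≤ η₂ ≤ η⁺. (ii) For all a, b with 0 < a ≤ b < π there exists γ > 0 such that √(Λᵒ(η₁)) − √(Λᵒ(η₂)) ≥ γ·(η₂ − η₁) whenever a ≤ η₁ ≤ η₂ ≤ b. In particular, the square roots of the eigenvalues on the corresponding filtered parts of the acoustic and optic branches have a uniform spectral gap. -/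
open Real

/-!
Write `s = sin (η/2)` and `Q = 11 + 4 cos² (η/2) + √Δ`, so that `Λᵃ = 120 s² / Q` and
`Λᵒ = 2 Q / (1 + s²)`. On `[0, π]` the function `s` increases while `Q` decreases (`Δ` is
increasing in `cos² (η/2) ∈ [0, 1]`), and `12 ≤ Q ≤ 30`. Hence `√Λᵃ = s √(120 / Q)` grows at
least like `2 s`, and `Λᵒ` decreases at least like `6 s²`; since `Λᵒ ≤ 8²`, `√Λᵒ` decreases at
least like `(3/8) s²`. Both gaps are then bounded below by the mean value theorem for `sin`.
-/

noncomputable def acousticDenom (η : ℝ) : ℝ :=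
  11 + 4 * cos (η / 2) ^ 2 + √(Delta η)

lemma Lama_eq (η : ℝ) : Lama η = 120 * sin (η / 2) ^ 2 / acousticDenom η := rfl

lemma Lamo_eq (η : ℝ) : Lamo η = 2 * acousticDenom η / (1 + sin (η / 2) ^ 2) := by
  rw [Lamo, acousticDenom]
  ring

lemma one_le_sqrt_Delta (η : ℝ) : 1 ≤ √(Delta η) := by
  have := cos_sq_le_one (η / 2)
  rw [one_le_sqrt, Delta]
  nlinarith [sq_nonneg (cos (η / 2))]

lemma sqrt_Delta_le (η : ℝ) : √(Delta η) ≤ 15 := by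
  have := cos_sq_le_one (η / 2)
  rw [sqrt_le_left (by norm_num), Delta]
  nlinarith [sq_nonneg (cos (η / 2))]

lemma twelve_le_acousticDenom (η : ℝ) : 12 ≤ acousticDenom η := by
  have := one_le_sqrt_Delta η
  rw [acousticDenom]
  nlinarith [sq_nonneg (cos (η / 2))]

lemma acousticDenom_le (η : ℝ) : acousticDenom η ≤ 30 := by
  have := sqrt_Delta_le η
  have := cos_sq_le_one (η / 2)
  rw [acousticDenom]
  linarith

lemma cos_sq_half_antitoneOn : AntitoneOn (fun η => cos (η / 2) ^ 2) (Set.Icc 0 π) := by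
  intro x ⟨hx0, hxπ⟩ y ⟨_, hyπ⟩ hxy
  have hcos : cos (y / 2) ≤ cos (x / 2) :=
    cos_le_cos_of_nonneg_of_le_pi (by linarith) (by linarith) (by linarith)
  have hy : 0 ≤ cos (y / 2) := cos_nonneg_of_mem_Icc ⟨by linarith [pi_pos], by linarith⟩
  exact pow_le_pow_left₀ hy hcos 2

lemma acousticDenom_antitoneOn : AntitoneOn acousticDenom (Set.Icc 0 π) := by
  intro x hx y hy hxy
  have hc : cos (y / 2) ^ 2 ≤ cos (x / 2) ^ 2 := cos_sq_half_antitoneOn hx hy hxy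
  have hc1 := cos_sq_le_one (x / 2)
  have hc0 := sq_nonneg (cos (y / 2))
  -- `1 + 268 t - 44 t²` is increasing for `t ≤ 268 / 88`, in particular on `[0, 1]`.
  have hΔ : Delta y ≤ Delta x := by
    rw [Delta, Delta]
    nlinarith [mul_nonneg (sub_nonneg.2 hc)
      (by linarith : (0 : ℝ) ≤ 3 - cos (x / 2) ^ 2 - cos (y / 2) ^ 2)]
  rw [acousticDenom, acousticDenom]
  linarith [sqrt_le_sqrt hΔ]

lemma sqrt_Lama_eq {η : ℝ} (hs : 0 ≤ sin (η / 2)) :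
    √(Lama η) = sin (η / 2) * √(120 / acousticDenom η) := by
  rw [Lama_eq, mul_comm, mul_div_assoc, sqrt_mul (sq_nonneg _), sqrt_sq hs, mul_comm]

lemma sin_half_nonneg {η : ℝ} (h0 : 0 ≤ η) (hπ : η ≤ π) : 0 ≤ sin (η / 2) :=
  sin_nonneg_of_nonneg_of_le_pi (by linarith) (by linarith [pi_pos])

lemma sin_half_le_sin_half {x y : ℝ} (hx : 0 ≤ x) (hy : y ≤ π) (hxy : x ≤ y) :
    sin (x / 2) ≤ sin (y / 2) :=
  sin_le_sin_of_le_of_le_pi_div_two (by linarith [pi_pos]) (by linarith) (by linarith)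

lemma two_mul_sin_half_sub_le_sqrt_Lama_sub {η₁ η₂ : ℝ} (h₁ : 0 ≤ η₁) (h₁₂ : η₁ ≤ η₂)
    (h₂ : η₂ ≤ π) :
    2 * (sin (η₂ / 2) - sin (η₁ / 2)) ≤ √(Lama η₂) - √(Lama η₁) := by
  have hs₁ := sin_half_nonneg h₁ (h₁₂.trans h₂)
  have hs₂ := sin_half_nonneg (h₁.trans h₁₂) h₂
  have hs := sin_half_le_sin_half h₁ h₂ h₁₂
  have hQ := acousticDenom_antitoneOn ⟨h₁, h₁₂.trans h₂⟩ ⟨h₁.trans h₁₂, h₂⟩ h₁₂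
  have hr : √(120 / acousticDenom η₁) ≤ √(120 / acousticDenom η₂) :=
    sqrt_le_sqrt (div_le_div_of_nonneg_left (by norm_num)
      (by linarith [twelve_le_acousticDenom η₂]) hQ)
  have hQ₁ := twelve_le_acousticDenom η₁
  have hr₁ : 2 ≤ √(120 / acousticDenom η₁) := by
    rw [le_sqrt (by norm_num) (div_nonneg (by norm_num) (by linarith)), le_div_iff₀ (by linarith)]
    linarith [acousticDenom_le η₁]
  rw [sqrt_Lama_eq hs₁, sqrt_Lama_eq hs₂]
  nlinarith [mul_le_mul_of_nonneg_left hr hs₂]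

lemma Lamo_nonneg (η : ℝ) : 0 ≤ Lamo η := by
  rw [Lamo_eq]
  have := twelve_le_acousticDenom η
  positivity

lemma Lamo_le (η : ℝ) : Lamo η ≤ 64 := by
  rw [Lamo_eq, div_le_iff₀ (by positivity)]
  nlinarith [acousticDenom_le η, sq_nonneg (sin (η / 2))]

lemma six_mul_sin_sq_half_sub_le_Lamo_sub {η₁ η₂ : ℝ} (h₁ : 0 ≤ η₁) (h₁₂ : η₁ ≤ η₂)
    (h₂ : η₂ ≤ π) :
    6 * (sin (η₂ / 2) ^ 2 - sin (η₁ / 2) ^ 2) ≤ Lamo η₁ - Lamo η₂ := by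
  have hQ := acousticDenom_antitoneOn ⟨h₁, h₁₂.trans h₂⟩ ⟨h₁.trans h₁₂, h₂⟩ h₁₂
  have hQ₂ := twelve_le_acousticDenom η₂
  have hp : sin (η₁ / 2) ^ 2 ≤ sin (η₂ / 2) ^ 2 :=
    pow_le_pow_left₀ (sin_half_nonneg h₁ (h₁₂.trans h₂)) (sin_half_le_sin_half h₁ h₂ h₁₂) 2
  have hp₂ := sin_sq_le_one (η₂ / 2)
  rw [Lamo_eq, Lamo_eq, div_sub_div _ _ (by positivity) (by positivity),
    le_div_iff₀ (by positivity)]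
  nlinarith [mul_le_mul_of_nonneg_right hQ (by positivity : (0 : ℝ) ≤ 1 + sin (η₂ / 2) ^ 2),
    mul_le_mul_of_nonneg_left hp (by linarith : (0 : ℝ) ≤ 2 * acousticDenom η₂ - 24),
    mul_nonneg (sub_nonneg.2 hp) (by positivity : (0 : ℝ) ≤ sin (η₁ / 2) ^ 2 + 1),
    mul_nonneg (sub_nonneg.2 hp) (sq_nonneg (sin (η₁ / 2)))]

lemma sub_le_two_mul_mul_sqrt_sub_sqrt {x y m : ℝ} (hy : 0 ≤ y) (hyx : y ≤ x) (hm : 0 ≤ m)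
    (hxm : x ≤ m ^ 2) : x - y ≤ 2 * m * (√x - √y) := by
  have hsq : √y ≤ √x := sqrt_le_sqrt hyx
  have hxm' : √x ≤ m := (sqrt_le_left hm).2 hxm
  calc x - y = (√x + √y) * (√x - √y) := by
        rw [← mul_self_sub_mul_self, mul_self_sqrt (hy.trans hyx), mul_self_sqrt hy]
    _ ≤ 2 * m * (√x - √y) := by
        apply mul_le_mul_of_nonneg_right _ (sub_nonneg.2 hsq)
        linarith

lemma cos_mul_sub_le_sin_sub_sin {x y b : ℝ} (hx : 0 ≤ x) (hxy : x ≤ y) (hyb : y ≤ b)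
    (hb : b ≤ π) : cos b * (y - x) ≤ sin y - sin x := by
  refine (convex_Icc 0 b).mul_sub_le_image_sub_of_le_deriv continuous_sin.continuousOn
    differentiable_sin.differentiableOn (fun t ht => ?_) x ⟨hx, hxy.trans hyb⟩ y
    ⟨hx.trans hxy, hyb⟩ hxy
  rw [interior_Icc] at ht
  rw [Real.deriv_sin]
  exact cos_le_cos_of_nonneg_of_le_pi ht.1.le hb ht.2.le

lemma cos_half_mul_sub_le_sqrt_Lama_sub {η₁ η₂ b : ℝ} (h₁ : 0 ≤ η₁) (h₁₂ : η₁ ≤ η₂)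
    (h₂ : η₂ ≤ b) (hb : b ≤ π) :
    cos (b / 2) * (η₂ - η₁) ≤ √(Lama η₂) - √(Lama η₁) := by
  have hsin : cos (b / 2) * (η₂ / 2 - η₁ / 2) ≤ sin (η₂ / 2) - sin (η₁ / 2) :=
    cos_mul_sub_le_sin_sub_sin (by linarith) (by linarith) (by linarith) (by linarith [pi_pos])
  linarith [two_mul_sin_half_sub_le_sqrt_Lama_sub h₁ h₁₂ (h₂.trans hb)]

lemma mul_sub_le_sqrt_Lamo_sub {a b η₁ η₂ : ℝ} (ha : 0 ≤ a) (h₁ : a ≤ η₁) (h₁₂ : η₁ ≤ η₂)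
    (h₂ : η₂ ≤ b) (hb : b ≤ π) :
    3 / 8 * sin (a / 2) * cos (b / 2) * (η₂ - η₁) ≤ √(Lamo η₁) - √(Lamo η₂) := by
  have hη₁ : 0 ≤ η₁ := ha.trans h₁
  have hη₂ : η₂ ≤ π := h₂.trans hb
  have hsin : cos (b / 2) * (η₂ / 2 - η₁ / 2) ≤ sin (η₂ / 2) - sin (η₁ / 2) :=
    cos_mul_sub_le_sin_sub_sin (by linarith) (by linarith) (by linarith) (by linarith [pi_pos])
  have hs₁ := sin_half_nonneg hη₁ (h₁₂.trans hη₂)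
  have hs := sin_half_le_sin_half hη₁ hη₂ h₁₂
  have hsa : sin (a / 2) ≤ sin (η₁ / 2) := sin_half_le_sin_half ha (h₁₂.trans hη₂) h₁
  have hsa₀ := sin_half_nonneg ha (h₁.trans (h₁₂.trans hη₂))
  have hcb : 0 ≤ cos (b / 2) := cos_nonneg_of_mem_Icc ⟨by linarith [pi_pos], by linarith⟩
  have hLamo := six_mul_sin_sq_half_sub_le_Lamo_sub hη₁ h₁₂ hη₂
  have hsqrt := sub_le_two_mul_mul_sqrt_sub_sqrt (Lamo_nonneg η₂) (by nlinarith)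
    (by norm_num : (0 : ℝ) ≤ 8) ((Lamo_le η₁).trans_eq (by norm_num))
  nlinarith [mul_le_mul_of_nonneg_left hsin
      (by linarith : (0 : ℝ) ≤ sin (η₁ / 2) + sin (η₂ / 2)),
    mul_le_mul_of_nonneg_right (by linarith : 2 * sin (a / 2) ≤ sin (η₁ / 2) + sin (η₂ / 2))
      (mul_nonneg hcb (by linarith : (0 : ℝ) ≤ η₂ / 2 - η₁ / 2))]

theorem stmt_16 :
    (∀ ηplus ∈ Set.Ioo (0 : ℝ) Real.pi, ∃ γ > (0 : ℝ),
      ∀ η₁ η₂ : ℝ, 0 ≤ η₁ → η₁ ≤ η₂ → η₂ ≤ ηplus →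
        Real.sqrt (Lama η₂) - Real.sqrt (Lama η₁) ≥ γ * (η₂ - η₁)) ∧
    (∀ a b : ℝ, 0 < a → a ≤ b → b < Real.pi → ∃ γ > (0 : ℝ),
      ∀ η₁ η₂ : ℝ, a ≤ η₁ → η₁ ≤ η₂ → η₂ ≤ b →
        Real.sqrt (Lamo η₁) - Real.sqrt (Lamo η₂) ≥ γ * (η₂ - η₁)) := by
  constructor
  · rintro b ⟨hb₀, hbπ⟩
    refine ⟨cos (b / 2), cos_pos_of_mem_Ioo ⟨by linarith, by linarith⟩,
      fun η₁ η₂ h₁ h₁₂ h₂ => ?_⟩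
    exact cos_half_mul_sub_le_sqrt_Lama_sub h₁ h₁₂ h₂ hbπ.le
  · intro a b ha hab hbπ
    have hsa : 0 < sin (a / 2) := sin_pos_of_pos_of_lt_pi (by linarith) (by linarith [pi_pos])
    have hcb : 0 < cos (b / 2) := cos_pos_of_mem_Ioo ⟨by linarith [pi_pos], by linarith⟩
    refine ⟨3 / 8 * sin (a / 2) * cos (b / 2), by positivity, fun η₁ η₂ h₁ h₁₂ h₂ => ?_⟩
    exact mul_sub_le_sqrt_Lamo_sub ha.le h₁ h₁₂ h₂ hbπ.le
end
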